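/- Let N ≥ 1 and c : {0,…,N−1} → ℂ. Define ĉ[j] = Σ_{ℓ=0}^{N−1} c[ℓ]·cos(π·ℓ·(2j+1)/(2N)) for 0 ≤ j ≤ N−1, let ω = exp(−2πi/(4N)), define x : {0,…,4N−1} → ℂ by x[0] = 2c[0], x[ℓ] = x[4N−ℓ] = c[ℓ] for 1 ≤ ℓ ≤ N−1 and x[ℓ] = 0 otherwise, and define f : {0,…,2N−1} → ℂ by f[j] = ω^j · x[(j + 3N) mod 4N]. Then the length-2N DFT f̂[j] = Σ_{ℓ=0}^{2N−1} f[ℓ]·exp(−2πi·jℓ/(2N)) satisfies, for every 0 ≤ j ≤ 2N−1: f̂[j] = 2·ω^{(2j+1)N}·ĉ[min(j, 2N−1−j)]. Consequently every entry of f is a scalar multiple of an entry of c and every entry of f̂ is a scalar multiple of an entry of ĉ, so c (resp. ĉ) is k-sparse if and only if f (resp. f̂) is 2k-sparse; this reduces the sparse Chebyshev/DCT recovery problem to the sparse DFT. -/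

import Mathlib

/-!
Put `θ = ω ^ (2j + 1) = exp (-i t)` with `t = π (2j + 1) / 2N`. Since the length-`2N`
DFT kernel is `ω ^ (2jℓ)`, the DFT sum is `∑ θ^ℓ x[(ℓ + 3N) mod 4N]`, and the quarter shift
of the symmetric extension `x` folds it onto
`∑ c[k] (θ^(N+k) + θ^(N-k)) = 2 θ^N ∑ c[k] cos (k t)`. Finally `cos (π k m / 2N)` is
unchanged under `m ↦ 4N - m`, which exchanges `2j + 1` and
`2 (2N - 1 - j) + 1`; this is where `min j (2N - 1 - j)` comes from.
-/

open Finset Complex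
open scoped Real

section Fold

variable {R : Type*} [CommSemiring R]

theorem pow_add_add_pow_sub_of_mul_eq_one {u v : R} (huv : u * v = 1) {N ℓ : ℕ}
    (hℓ : ℓ ≤ N) :
    u ^ (N + ℓ) + u ^ (N - ℓ) = u ^ N * (u ^ ℓ + v ^ ℓ) := by
  obtain ⟨m, rfl⟩ := Nat.exists_eq_add_of_le' hℓ
  calc u ^ (m + ℓ + ℓ) + u ^ (m + ℓ - ℓ) = u ^ (m + ℓ + ℓ) + u ^ m * (u * v) ^ ℓ := by
        rw [huv, one_pow, mul_one, Nat.add_sub_cancel]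
    _ = u ^ (m + ℓ) * (u ^ ℓ + v ^ ℓ) := by ring

theorem sum_pow_mul_quarter_shift_eq {N : ℕ} (hN : 0 < N) (c x : ℕ → R) (θ : R)
    (hx0 : x 0 = 2 * c 0)
    (hx1 : ∀ ℓ, 1 ≤ ℓ → ℓ < N → x ℓ = c ℓ)
    (hx2 : ∀ ℓ, 1 ≤ ℓ → ℓ < N → x (4 * N - ℓ) = c ℓ)
    (hx3 : x (3 * N) = 0) :
    ∑ ℓ ∈ range (2 * N), θ ^ ℓ * x ((ℓ + 3 * N) % (4 * N)) =
      ∑ k ∈ range N, c k * (θ ^ (N + k) + θ ^ (N - k)) := by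
  have lower : ∑ ℓ ∈ range N, θ ^ ℓ * x ((ℓ + 3 * N) % (4 * N)) =
      ∑ k ∈ Ico 1 N, c k * θ ^ (N - k) := by
    have reflect := sum_Ico_reflect (fun k => c k * θ ^ (N - k)) 1 (m := N) (n := N) (by omega)
    rw [Nat.add_sub_cancel, Nat.add_sub_cancel_left] at reflect
    rw [sum_range_eq_add_Ico _ hN, zero_add, Nat.mod_eq_of_lt (by omega), hx3, mul_zero, zero_add,
      ← reflect]
    refine sum_congr rfl fun ℓ hℓ => ?_
    obtain ⟨hℓ1, hℓN⟩ := mem_Ico.mp hℓ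
    rw [Nat.mod_eq_of_lt (by omega), show ℓ + 3 * N = 4 * N - (N - ℓ) by omega,
      hx2 _ (by omega) (by omega), Nat.sub_sub_self hℓN.le, mul_comm]
  have upper : ∑ k ∈ range N, θ ^ (N + k) * x ((N + k + 3 * N) % (4 * N)) =
      2 * c 0 * θ ^ N + ∑ k ∈ Ico 1 N, c k * θ ^ (N + k) := by
    rw [sum_range_eq_add_Ico _ hN]
    refine congrArg₂ (· + ·) ?_ (sum_congr rfl fun k hk => ?_)
    · rw [show N + 0 + 3 * N = 4 * N by ring, Nat.mod_self, hx0, add_zero, mul_comm]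
    · obtain ⟨hk1, hkN⟩ := mem_Ico.mp hk
      rw [show N + k + 3 * N = k + 4 * N by ring, Nat.add_mod_right,
        Nat.mod_eq_of_lt (by omega), hx1 k hk1 hkN, mul_comm]
  rw [two_mul, sum_range_add, lower, upper, sum_range_eq_add_Ico _ hN]
  simp only [mul_add, sum_add_distrib, add_zero, Nat.sub_zero]
  ring

end Fold

theorem two_mul_exp_pow_mul_cos (t : ℝ) {N ℓ : ℕ} (hℓ : ℓ ≤ N) :
    2 * exp (-t * I) ^ N * (Real.cos (ℓ * t) : ℂ) =
      exp (-t * I) ^ (N + ℓ) + exp (-t * I) ^ (N - ℓ) := by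
  have hcos : 2 * (Real.cos (ℓ * t) : ℂ) = exp (-t * I) ^ ℓ + exp (t * I) ^ ℓ := by
    rw [ofReal_cos, two_cos, ← exp_nat_mul, ← exp_nat_mul]
    push_cast
    ring_nf
  have hinv : exp (-t * I) * exp (t * I) = 1 := by
    rw [← exp_add, neg_mul, neg_add_cancel, exp_zero]
  rw [pow_add_add_pow_sub_of_mul_eq_one hinv hℓ, ← hcos]
  ring

theorem Real.cos_pi_mul_odd_div_eq_of_add_eq {N j j' : ℕ} (hN : 0 < N) (h : j + j' + 1 = 2 * N)
    (ℓ : ℕ) :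
    Real.cos (π * ℓ * (2 * (j' : ℝ) + 1) / (2 * N)) =
      Real.cos (π * ℓ * (2 * (j : ℝ) + 1) / (2 * N)) := by
  have h' : 2 * (j' : ℝ) + 1 = 4 * N - (2 * j + 1) := by
    linear_combination (2 : ℝ) * (by exact_mod_cast h : (j : ℝ) + j' + 1 = 2 * N)
  have hN' : (N : ℝ) ≠ 0 := by exact_mod_cast hN.ne'
  have reflect : π * ℓ * (2 * (j' : ℝ) + 1) / (2 * N) =
      ℓ * (2 * π) - π * ℓ * (2 * (j : ℝ) + 1) / (2 * N) := by
    rw [h']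
    field_simp
    ring
  rw [reflect, Real.cos_nat_mul_two_pi_sub]

theorem stmt_16 (N : ℕ) (c x : ℕ → ℂ)
    (hx0 : x 0 = 2 * c 0)
    (hx1 : ∀ ℓ, 1 ≤ ℓ → ℓ < N → x ℓ = c ℓ)
    (hx2 : ∀ ℓ, 1 ≤ ℓ → ℓ < N → x (4 * N - ℓ) = c ℓ)
    (hx3 : ∀ ℓ, N ≤ ℓ → ℓ ≤ 3 * N → x ℓ = 0)
    (ω : ℂ) (hω : ω = Complex.exp (-(2 * (Real.pi : ℂ) * Complex.I) / (4 * (N : ℂ))))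
    (f : ℕ → ℂ) (hf : ∀ ℓ, ℓ < 2 * N → f ℓ = ω ^ ℓ * x ((ℓ + 3 * N) % (4 * N)))
    (j : ℕ) (hj : j < 2 * N) :
    ∑ ℓ ∈ Finset.range (2 * N),
        f ℓ * Complex.exp (-(2 * (Real.pi : ℂ) * Complex.I) * ((j : ℂ) * (ℓ : ℂ)) / (2 * (N : ℂ))) =
      2 * ω ^ ((2 * j + 1) * N) * ∑ ℓ ∈ Finset.range N,
        c ℓ * (Real.cos (Real.pi * (ℓ : ℝ) * (2 * ((min j (2 * N - 1 - j) : ℕ) : ℝ) + 1) /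
          (2 * (N : ℝ))) : ℂ) := by
  have hN : 0 < N := by omega
  have hNc : (N : ℂ) ≠ 0 := by exact_mod_cast hN.ne'
  set t : ℝ := π * (2 * j + 1) / (2 * N) with ht
  have hθ : ω ^ (2 * j + 1) = exp (-t * I) := by
    rw [hω, ← exp_nat_mul, ht]
    congr 1
    push_cast
    field_simp
    ring
  have hkernel (ℓ : ℕ) :
      exp (-(2 * (π : ℂ) * I) * ((j : ℂ) * (ℓ : ℂ)) / (2 * (N : ℂ))) =
        ω ^ (2 * j * ℓ) := by
    rw [hω, ← exp_nat_mul]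
    congr 1
    push_cast
    field_simp
    ring
  have hdft : ∀ ℓ ∈ range (2 * N),
      f ℓ * exp (-(2 * (π : ℂ) * I) * ((j : ℂ) * (ℓ : ℂ)) / (2 * (N : ℂ))) =
        exp (-t * I) ^ ℓ * x ((ℓ + 3 * N) % (4 * N)) := by
    intro ℓ hℓ
    rw [hf ℓ (mem_range.mp hℓ), hkernel, ← hθ, ← pow_mul,
      show (2 * j + 1) * ℓ = ℓ + 2 * j * ℓ by ring, pow_add]
    ring
  rw [sum_congr rfl hdft,
    sum_pow_mul_quarter_shift_eq hN c x _ hx0 hx1 hx2 (hx3 _ (by omega) le_rfl), mul_sum]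
  refine sum_congr rfl fun ℓ hℓ => ?_
  have hreflect : Real.cos (π * ℓ * (2 * ((min j (2 * N - 1 - j) : ℕ) : ℝ) + 1) / (2 * N)) =
      Real.cos (π * ℓ * (2 * (j : ℝ) + 1) / (2 * N)) := by
    obtain ⟨hmin, -⟩ | ⟨hmin, -⟩ := min_cases j (2 * N - 1 - j) <;> rw [hmin]
    exact Real.cos_pi_mul_odd_div_eq_of_add_eq hN (by omega) ℓ
  rw [hreflect, show π * ℓ * (2 * (j : ℝ) + 1) / (2 * N) = ℓ * t by rw [ht]; ring,
    pow_mul, hθ, mul_left_comm, two_mul_exp_pow_mul_cos t (mem_range.mp hℓ).le]
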